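/- For every integer n ≥ 0, every integer r ≥ 1 and every real number x, Σ_{k=0}^{n} S_{J,λ}^{(2)}(n,k)·C_k^{(r)}(x) = Σ_{k=0}^{n} E_{k,λ}^{(r)}(x)·S_{2,λ}(n,k). -/

import Mathlib

open Finset PowerSeries

/-- degenerate falling factorial `(x)_{n,λ}`; `dff 1 x n` is the ordinary falling factorial. -/
noncomputable def dff (lam x : ℝ) (n : ℕ) : ℝ := ∏ i ∈ Finset.range n, (x - (i : ℝ) * lam)

/-- `(1)_{n,1/λ} = ∏_{i<n} (1 - i/λ)`. -/
noncomputable def oneFall (lam : ℝ) (n : ℕ) : ℝ := ∏ i ∈ Finset.range n, (1 - (i : ℝ) / lam)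

/-- degenerate exponential `e_λ^x(t)` as a formal power series. -/
noncomputable def degExp (lam x : ℝ) : PowerSeries ℝ :=
  PowerSeries.mk fun n => dff lam x n / n.factorial

/-- `(1+t)^y = Σ_{n≥0} (y)_n t^n/n!`. -/
noncomputable def onePlus (y : ℝ) : PowerSeries ℝ :=
  PowerSeries.mk fun n => dff 1 y n / n.factorial

/-- `(1-t)^y = Σ_{n≥0} (y)_n (-1)^n t^n/n!`. -/
noncomputable def oneMinus (y : ℝ) : PowerSeries ℝ :=
  PowerSeries.mk fun n => dff 1 y n * (-1) ^ n / n.factorial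

/-- `log_λ(1+t) = Σ_{n≥1} λ^{n-1} (1)_{n,1/λ} t^n/n!`. -/
noncomputable def degLog (lam : ℝ) : PowerSeries ℝ :=
  PowerSeries.mk fun n => if n = 0 then 0 else lam ^ (n - 1) * oneFall lam n / n.factorial

/-- `log_λ(1-t) = Σ_{n≥1} λ^{n-1} (1)_{n,1/λ} (-1)^n t^n/n!`. -/
noncomputable def degLogNeg (lam : ℝ) : PowerSeries ℝ :=
  PowerSeries.mk fun n =>
    if n = 0 then 0 else lam ^ (n - 1) * oneFall lam n * (-1) ^ n / n.factorial

/-- composition `f(g(t))` of formal power series (the usual composition when the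
constant term of `g` is zero). -/
noncomputable def pcomp (f g : PowerSeries ℝ) : PowerSeries ℝ :=
  PowerSeries.mk fun n =>
    ∑ k ∈ Finset.range (n + 1), (PowerSeries.coeff k f) * (PowerSeries.coeff n (g ^ k))



lemma coeff_pcomp (f g : PowerSeries ℝ) (n : ℕ) :
    coeff n (pcomp f g) = ∑ k ∈ range (n + 1), coeff k f * coeff n (g ^ k) :=
  coeff_mk _ _

lemma coeff_pow_zero {g : PowerSeries ℝ} (hg : constantCoeff g = 0) :
    ∀ (k n : ℕ), n < k → coeff n (g ^ k) = 0 := by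
  intro k
  induction k with
  | zero => intro n hn; omega
  | succ k ih =>
    intro n hn
    rw [pow_succ, coeff_mul]
    apply Finset.sum_eq_zero
    rintro ⟨a, b⟩ hab
    rw [Finset.HasAntidiagonal.mem_antidiagonal] at hab
    simp only at hab ⊢
    rcases Nat.lt_or_ge a k with h | h
    · rw [ih a h, zero_mul]
    · have hb : b = 0 := by omega
      subst hb
      rw [PowerSeries.coeff_zero_eq_constantCoeff, hg, mul_zero]

lemma coeff_pcomp_ext {g : PowerSeries ℝ} (hg : constantCoeff g = 0) (f : PowerSeries ℝ)
    {n N : ℕ} (h : n ≤ N) :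
    coeff n (pcomp f g) = ∑ k ∈ range (N + 1), coeff k f * coeff n (g ^ k) := by
  rw [coeff_pcomp]
  apply Finset.sum_subset (range_subset_range.2 (by omega))
  intro k hk hk2
  rw [mem_range] at hk2
  rw [coeff_pow_zero hg k n (by omega), mul_zero]

lemma pcomp_one (g : PowerSeries ℝ) : pcomp 1 g = 1 := by
  ext n
  rw [coeff_pcomp]
  rw [Finset.sum_eq_single 0]
  · simp
  · intro k _ hk
    simp [PowerSeries.coeff_one, hk]
  · simp

lemma pcomp_add (f1 f2 g : PowerSeries ℝ) : pcomp (f1 + f2) g = pcomp f1 g + pcomp f2 g := by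
  ext n
  simp [coeff_pcomp, add_mul, Finset.sum_add_distrib]

lemma pcomp_sub (f1 f2 g : PowerSeries ℝ) : pcomp (f1 - f2) g = pcomp f1 g - pcomp f2 g := by
  ext n
  simp [coeff_pcomp, sub_mul, Finset.sum_sub_distrib]

lemma pcomp_smul (c : ℝ) (f g : PowerSeries ℝ) : pcomp (c • f) g = c • pcomp f g := by
  ext n
  simp [coeff_pcomp, Finset.mul_sum, mul_assoc]

lemma constantCoeff_pcomp {g : PowerSeries ℝ} (hg : constantCoeff g = 0) (f : PowerSeries ℝ) :
    constantCoeff (pcomp f g) = constantCoeff f := by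
  rw [← coeff_zero_eq_constantCoeff, coeff_pcomp]
  simp

lemma coeff_eval₂_of_low_zero {g : PowerSeries ℝ} (hg : constantCoeff g = 0)
    (p : Polynomial ℝ) (n : ℕ) (h : ∀ k, k ≤ n → p.coeff k = 0) :
    coeff n (Polynomial.eval₂ (PowerSeries.C) g p) = 0 := by
  rw [Polynomial.eval₂_eq_sum, Polynomial.sum, map_sum]
  apply Finset.sum_eq_zero
  intro k hk
  rcases le_or_gt k n with h1 | h1
  · rw [h k h1]; simp
  · rw [coeff_C_mul, coeff_pow_zero hg k n h1, mul_zero]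

lemma coeff_eval₂_trunc {g : PowerSeries ℝ} (hg : constantCoeff g = 0) (f : PowerSeries ℝ)
    {n N : ℕ} (h : n < N) :
    coeff n (Polynomial.eval₂ (PowerSeries.C) g (trunc N f)) = coeff n (pcomp f g) := by
  rw [Polynomial.eval₂_eq_sum, Polynomial.sum, map_sum,
    coeff_pcomp_ext hg f (show n ≤ N - 1 by omega)]
  rw [show N - 1 + 1 = N by omega]
  rw [Finset.sum_subset (show (trunc N f).support ⊆ range N by
      intro k hk
      rw [Polynomial.mem_support_iff, PowerSeries.coeff_trunc] at hk
      rw [mem_range]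
      by_contra hc
      exact hk (if_neg hc))]
  · apply Finset.sum_congr rfl
    intro k hk
    rw [mem_range] at hk
    rw [coeff_C_mul, PowerSeries.coeff_trunc, if_pos hk]
  · intro k hk hk2
    rw [Polynomial.notMem_support_iff] at hk2
    rw [hk2]
    simp

lemma pcomp_mul {g : PowerSeries ℝ} (hg : constantCoeff g = 0) (f1 f2 : PowerSeries ℝ) :
    pcomp (f1 * f2) g = pcomp f1 g * pcomp f2 g := by
  ext n
  rw [← coeff_eval₂_trunc hg (f1 * f2) (Nat.lt_succ_self n), coeff_mul]
  have h2 : ∀ p ∈ antidiagonal n,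
      coeff p.1 (pcomp f1 g) * coeff p.2 (pcomp f2 g) =
      coeff p.1 (Polynomial.eval₂ (PowerSeries.C) g (trunc (n + 1) f1)) *
      coeff p.2 (Polynomial.eval₂ (PowerSeries.C) g (trunc (n + 1) f2)) := by
    rintro ⟨a, b⟩ hab
    rw [Finset.HasAntidiagonal.mem_antidiagonal] at hab
    simp only
    rw [coeff_eval₂_trunc hg f1 (show a < n + 1 by omega),
      coeff_eval₂_trunc hg f2 (show b < n + 1 by omega)]
  rw [Finset.sum_congr rfl h2, ← coeff_mul, ← Polynomial.eval₂_mul]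
  have key : coeff n (Polynomial.eval₂ (PowerSeries.C) g
      (trunc (n + 1) f1 * trunc (n + 1) f2 - trunc (n + 1) (f1 * f2))) = 0 := by
    apply coeff_eval₂_of_low_zero hg
    intro k hk
    rw [Polynomial.coeff_sub, Polynomial.coeff_mul, PowerSeries.coeff_trunc,
      if_pos (show k < n + 1 by omega), PowerSeries.coeff_mul, sub_eq_zero]
    apply Finset.sum_congr rfl
    rintro ⟨a, b⟩ hab
    rw [Finset.HasAntidiagonal.mem_antidiagonal] at hab
    simp only
    rw [PowerSeries.coeff_trunc, PowerSeries.coeff_trunc,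
      if_pos (show a < n + 1 by omega), if_pos (show b < n + 1 by omega)]
  rw [Polynomial.eval₂_sub, map_sub, sub_eq_zero] at key
  exact key.symm

lemma pcomp_pow {g : PowerSeries ℝ} (hg : constantCoeff g = 0) (f : PowerSeries ℝ) (k : ℕ) :
    pcomp (f ^ k) g = (pcomp f g) ^ k := by
  induction k with
  | zero => simpa using pcomp_one g
  | succ k ih => rw [pow_succ, pow_succ, pcomp_mul hg, ih]

lemma pcomp_assoc {g h : PowerSeries ℝ} (hg : constantCoeff g = 0)
    (hh : constantCoeff h = 0) (f : PowerSeries ℝ) :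
    pcomp f (pcomp g h) = pcomp (pcomp f g) h := by
  have hgh : constantCoeff (pcomp g h) = 0 := by rw [constantCoeff_pcomp hh, hg]
  ext n
  rw [coeff_pcomp, coeff_pcomp]
  have e1 : ∀ k, coeff n ((pcomp g h) ^ k) = ∑ j ∈ range (n + 1),
      coeff j (g ^ k) * coeff n (h ^ j) := by
    intro k
    rw [← pcomp_pow hh, coeff_pcomp]
  simp_rw [e1, Finset.mul_sum]
  rw [Finset.sum_comm]
  apply Finset.sum_congr rfl
  intro j hj
  rw [mem_range] at hj
  rw [coeff_pcomp_ext hg f (show j ≤ n by omega), Finset.sum_mul]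
  apply Finset.sum_congr rfl
  intro k hk
  ring

-- ### dff and onePlus basics

lemma dff_zero (lam x : ℝ) : dff lam x 0 = 1 := by simp [dff]

lemma dff_succ (lam x : ℝ) (n : ℕ) :
    dff lam x (n + 1) = dff lam x n * (x - n * lam) := Finset.prod_range_succ _ _

lemma dff_one_step (y : ℝ) (n : ℕ) : dff 1 (y + 1) (n + 1) = dff 1 y n * (y + 1) := by
  rw [dff, Finset.prod_range_succ']
  simp only [Nat.cast_zero, zero_mul, sub_zero, dff]
  congr 1
  apply Finset.prod_congr rfl
  intro i _
  push_cast
  ring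

lemma constantCoeff_onePlus (y : ℝ) : constantCoeff (onePlus y) = 1 := by
  rw [← coeff_zero_eq_constantCoeff, onePlus, coeff_mk, dff_zero]
  simp

lemma onePlus_succ (y : ℝ) : onePlus (y + 1) = (1 + X) * onePlus y := by
  ext n
  rw [add_mul, one_mul, map_add]
  cases n with
  | zero =>
    rw [coeff_zero_X_mul]
    simp [onePlus, coeff_mk, dff_zero]
  | succ m =>
    rw [coeff_succ_X_mul]
    simp only [onePlus, coeff_mk]
    rw [dff_one_step, dff_succ]
    rw [Nat.factorial_succ]
    push_cast
    have h1 : (m.factorial : ℝ) ≠ 0 := Nat.cast_ne_zero.2 m.factorial_ne_zero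
    field_simp
    ring

lemma onePlus_zero : onePlus 0 = 1 := by
  ext n
  cases n with
  | zero => simp [onePlus, coeff_mk, dff_zero]
  | succ m =>
    simp only [onePlus, coeff_mk, PowerSeries.coeff_one, Nat.succ_ne_zero, if_false]
    rw [dff, Finset.prod_eq_zero (Finset.mem_range.2 (Nat.succ_pos m))]
    · simp
    · simp

lemma onePlus_nat (m : ℕ) : onePlus (m : ℝ) = (1 + X) ^ m := by
  induction m with
  | zero => simpa using onePlus_zero
  | succ k ih =>
    push_cast
    rw [onePlus_succ, ih, pow_succ, mul_comm]

-- ### polynomial extension machinery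

noncomputable def fallPoly (k : ℕ) : Polynomial ℝ :=
  ∏ i ∈ range k, (Polynomial.X - Polynomial.C (i : ℝ))

lemma fallPoly_eval (y : ℝ) (k : ℕ) : (fallPoly k).eval y = dff 1 y k := by
  rw [fallPoly, Polynomial.eval_prod, dff]
  apply Finset.prod_congr rfl
  intro i _
  simp

lemma poly_nat_ext {p q : Polynomial ℝ} (h : ∀ m : ℕ, p.eval (m : ℝ) = q.eval (m : ℝ)) :
    p = q := by
  apply Polynomial.eq_of_infinite_eval_eq
  apply Set.infinite_of_injective_forall_mem (f := fun m : ℕ => (m : ℝ)) Nat.cast_injective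
  intro m
  exact h m

lemma coeff_onePlus (y : ℝ) (n : ℕ) : coeff n (onePlus y) = dff 1 y n / n.factorial :=
  coeff_mk _ _

lemma coeff_form {a b : ℝ} (h : onePlus (a + b) = onePlus a * onePlus b) (n : ℕ) :
    dff 1 (a + b) n / n.factorial =
    ∑ k ∈ range (n + 1), dff 1 a k / k.factorial * (dff 1 b (n - k) / (n - k).factorial) := by
  have := congrArg (coeff n) h
  rw [coeff_mul, Finset.Nat.sum_antidiagonal_eq_sum_range_succ_mk] at this
  simpa [coeff_onePlus] using this

lemma onePlus_mul_nat (m : ℕ) (b : ℝ) : onePlus ((m : ℝ) + b) = onePlus (m : ℝ) * onePlus b := by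
  induction m with
  | zero => simp [onePlus_zero]
  | succ k ih =>
    have h1 : ((k : ℝ) + 1 + b) = ((k : ℝ) + b) + 1 := by ring
    push_cast
    rw [h1, onePlus_succ, ih, onePlus_succ]
    ring

lemma onePlus_mul (a b : ℝ) : onePlus (a + b) = onePlus a * onePlus b := by
  ext n
  rw [coeff_mul, Finset.Nat.sum_antidiagonal_eq_sum_range_succ_mk]
  simp only [coeff_onePlus]
  set P : Polynomial ℝ := Polynomial.C (1 / (n.factorial : ℝ)) *
    ∏ i ∈ range n, (Polynomial.X + Polynomial.C (b - i)) with hPdef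
  set Q : Polynomial ℝ := ∑ k ∈ range (n + 1),
    Polynomial.C (dff 1 b (n - k) / (k.factorial * (n - k).factorial)) * fallPoly k with hQdef
  have hP : ∀ y : ℝ, P.eval y = dff 1 (y + b) n / n.factorial := by
    intro y
    rw [hPdef, Polynomial.eval_mul, Polynomial.eval_C, Polynomial.eval_prod, dff]
    rw [Finset.prod_congr rfl (fun i _ => by
      rw [Polynomial.eval_add, Polynomial.eval_X, Polynomial.eval_C])]
    have : ∏ i ∈ range n, (y + (b - (i : ℝ))) = ∏ i ∈ range n, (y + b - (i : ℝ) * 1) := by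
      apply Finset.prod_congr rfl; intro i _; ring
    rw [this]
    ring
  have hQ : ∀ y : ℝ, Q.eval y =
      ∑ k ∈ range (n + 1), dff 1 y k / k.factorial * (dff 1 b (n - k) / (n - k).factorial) := by
    intro y
    rw [hQdef, Polynomial.eval_finset_sum]
    apply Finset.sum_congr rfl
    intro k _
    rw [Polynomial.eval_mul, Polynomial.eval_C, fallPoly_eval]
    have hk : (k.factorial : ℝ) ≠ 0 := Nat.cast_ne_zero.2 k.factorial_ne_zero
    have hnk : ((n - k).factorial : ℝ) ≠ 0 := Nat.cast_ne_zero.2 (n - k).factorial_ne_zero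
    field_simp
  have hPQ : P = Q := by
    apply poly_nat_ext
    intro m
    rw [hP, hQ]
    exact coeff_form (onePlus_mul_nat m b) n
  calc dff 1 (a + b) n / n.factorial = P.eval a := (hP a).symm
    _ = Q.eval a := by rw [hPQ]
    _ = _ := hQ a

lemma pcomp_X {g : PowerSeries ℝ} (hg : constantCoeff g = 0) : pcomp X g = g := by
  ext n
  rw [coeff_pcomp]
  cases n with
  | zero =>
    rw [show (0:ℕ) + 1 = 1 from rfl, range_one, Finset.sum_singleton, pow_zero,
      coeff_zero_eq_constantCoeff, hg]
    simp
  | succ m =>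
    rw [Finset.sum_eq_single 1]
    · simp
    · intro k _ hk
      rw [PowerSeries.coeff_X, if_neg hk, zero_mul]
    · intro h
      exfalso
      exact h (Finset.mem_range.2 (by omega))

lemma onePlus_pow (z : ℝ) (m : ℕ) : (onePlus z) ^ m = onePlus ((m : ℝ) * z) := by
  induction m with
  | zero => simp [onePlus_zero]
  | succ k ih =>
    rw [pow_succ, ih, ← onePlus_mul]
    push_cast
    ring_nf

lemma constantCoeff_onePlus_sub_one (z : ℝ) : constantCoeff (onePlus z - 1) = 0 := by
  rw [map_sub, constantCoeff_onePlus, map_one, sub_self]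

lemma key1 (y z : ℝ) : pcomp (onePlus y) (onePlus z - 1) = onePlus (y * z) := by
  have hg := constantCoeff_onePlus_sub_one z
  have hnat : ∀ m : ℕ, pcomp (onePlus (m : ℝ)) (onePlus z - 1) = onePlus ((m : ℝ) * z) := by
    intro m
    rw [onePlus_nat, pcomp_pow hg, pcomp_add, pcomp_one, pcomp_X hg, add_sub_cancel,
      onePlus_pow]
  ext n
  rw [coeff_pcomp, coeff_onePlus]
  set P : Polynomial ℝ := ∑ k ∈ range (n + 1),
    Polynomial.C (coeff (R := ℝ) n ((onePlus z - 1) ^ k) / k.factorial) * fallPoly k with hPdef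
  set Q : Polynomial ℝ := Polynomial.C (1 / (n.factorial : ℝ)) *
    ∏ i ∈ range n, (Polynomial.C z * Polynomial.X - Polynomial.C (i : ℝ)) with hQdef
  have hP : ∀ w : ℝ, P.eval w =
      ∑ k ∈ range (n + 1), coeff k (onePlus w) * coeff n ((onePlus z - 1) ^ k) := by
    intro w
    rw [hPdef, Polynomial.eval_finset_sum]
    apply Finset.sum_congr rfl
    intro k _
    rw [Polynomial.eval_mul, Polynomial.eval_C, fallPoly_eval, coeff_onePlus]
    ring
  have hQ : ∀ w : ℝ, Q.eval w = dff 1 (w * z) n / n.factorial := by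
    intro w
    rw [hQdef, Polynomial.eval_mul, Polynomial.eval_C, Polynomial.eval_prod, dff]
    rw [Finset.prod_congr rfl (fun i _ => by
      rw [Polynomial.eval_sub, Polynomial.eval_mul, Polynomial.eval_C, Polynomial.eval_X,
        Polynomial.eval_C])]
    have : ∏ i ∈ range n, (w * z - (i : ℝ) * 1) = ∏ i ∈ range n, (z * w - (i : ℝ)) := by
      apply Finset.prod_congr rfl; intro i _; ring
    rw [this]
    ring
  have hPQ : P = Q := by
    apply poly_nat_ext
    intro m
    rw [hP, hQ]
    have := congrArg (coeff n) (hnat m)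
    rw [coeff_pcomp, coeff_onePlus] at this
    exact this
  calc ∑ k ∈ range (n + 1), coeff k (onePlus y) * coeff n ((onePlus z - 1) ^ k)
      = P.eval y := (hP y).symm
    _ = Q.eval y := by rw [hPQ]
    _ = _ := hQ y

-- ### degExp lemmas

lemma dff_scale {lam : ℝ} (hlam : lam ≠ 0) (x : ℝ) (n : ℕ) :
    dff lam x n = lam ^ n * dff 1 (x / lam) n := by
  rw [dff, dff]
  have : ∀ i ∈ range n, x - (i:ℝ) * lam = lam * (x / lam - (i:ℝ) * 1) := by
    intro i _
    field_simp
  rw [Finset.prod_congr rfl this, Finset.prod_mul_distrib, Finset.prod_const, card_range]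

lemma degExp_eq {lam : ℝ} (hlam : lam ≠ 0) (x : ℝ) :
    degExp lam x = rescale lam (onePlus (x / lam)) := by
  ext n
  rw [degExp, coeff_mk, coeff_rescale, coeff_onePlus, dff_scale hlam]
  ring

lemma degExp_mul {lam : ℝ} (hlam : lam ≠ 0) (a b : ℝ) :
    degExp lam a * degExp lam b = degExp lam (a + b) := by
  rw [degExp_eq hlam, degExp_eq hlam, degExp_eq hlam, ← map_mul, ← onePlus_mul, add_div]

lemma degExp_zero (lam : ℝ) (hlam : lam ≠ 0) : degExp lam 0 = 1 := by
  rw [degExp_eq hlam, zero_div, onePlus_zero, map_one]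

lemma constantCoeff_degExp (lam x : ℝ) : constantCoeff (degExp lam x) = 1 := by
  rw [← coeff_zero_eq_constantCoeff, degExp, coeff_mk, dff_zero]
  simp

lemma pcomp_rescale_right (f g : PowerSeries ℝ) (c : ℝ) :
    pcomp f (rescale c g) = rescale c (pcomp f g) := by
  ext n
  rw [coeff_pcomp, coeff_rescale, coeff_pcomp, Finset.mul_sum]
  apply Finset.sum_congr rfl
  intro k _
  rw [← map_pow, coeff_rescale]
  ring

lemma constantCoeff_A {lam : ℝ} : constantCoeff (degExp lam 1 - 1) = 0 := by
  rw [map_sub, constantCoeff_degExp, map_one, sub_self]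

lemma key2 {lam : ℝ} (hlam : lam ≠ 0) (y : ℝ) :
    pcomp (onePlus y) (degExp lam 1 - 1) = degExp lam y := by
  have h1 : degExp lam 1 - 1 = rescale lam (onePlus (1 / lam) - 1) := by
    rw [map_sub, map_one, degExp_eq hlam]
  rw [h1, pcomp_rescale_right, key1, degExp_eq hlam]
  congr 1
  congr 1
  field_simp

-- ### linear independence of falling factorials

lemma fallPoly_monic (k : ℕ) : (fallPoly k).Monic :=
  Polynomial.monic_prod_of_monic _ _ (fun i _ => Polynomial.monic_X_sub_C _)

lemma fallPoly_natDegree (k : ℕ) : (fallPoly k).natDegree = k := by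
  rw [fallPoly, Polynomial.natDegree_prod]
  · simp only [Polynomial.natDegree_X_sub_C, Finset.sum_const, card_range, smul_eq_mul, mul_one]
  · intro i _
    exact Polynomial.X_sub_C_ne_zero _

lemma dff_indep : ∀ (n : ℕ) (c : ℕ → ℝ),
    (∀ y : ℝ, ∑ l ∈ range n, c l * dff 1 y l = 0) → ∀ l, l < n → c l = 0 := by
  intro n
  induction n with
  | zero => intro c h l hl; omega
  | succ m ih =>
    intro c h
    have hp : (∑ l ∈ range (m + 1), Polynomial.C (c l) * fallPoly l) = 0 := by
      apply Polynomial.funext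
      intro y
      rw [Polynomial.eval_finset_sum, Polynomial.eval_zero]
      simp only [Polynomial.eval_mul, Polynomial.eval_C, fallPoly_eval]
      exact h y
    have hcm : c m = 0 := by
      have h2 := congrArg (fun p => Polynomial.coeff p m) hp
      simp only [Polynomial.finset_sum_coeff, Polynomial.coeff_zero] at h2
      rw [Finset.sum_eq_single m] at h2
      · rw [Polynomial.coeff_C_mul] at h2
        have : (fallPoly m).coeff m = 1 := by
          have := (fallPoly_monic m).coeff_natDegree
          rwa [fallPoly_natDegree] at this
        rwa [this, mul_one] at h2
      · intro l hl hlm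
        rw [Polynomial.coeff_C_mul, Polynomial.coeff_eq_zero_of_natDegree_lt, mul_zero]
        rw [fallPoly_natDegree]
        rw [mem_range] at hl
        omega
      · intro hm
        exact absurd (Finset.mem_range.2 (Nat.lt_succ_self m)) hm
    intro l hl
    rcases Nat.lt_or_ge l m with h3 | h3
    · apply ih c _ l h3
      intro y
      have hy := h y
      rw [Finset.sum_range_succ, hcm, zero_mul, add_zero] at hy
      exact hy
    · have : l = m := by omega
      rw [this]
      exact hcm

lemma degExp_one_pow {lam : ℝ} (hlam : lam ≠ 0) (r : ℕ) :
    (degExp lam 1) ^ r = degExp lam (r : ℝ) := by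
  induction r with
  | zero => simp [degExp_zero lam hlam]
  | succ k ih =>
    rw [pow_succ, ih, degExp_mul hlam]
    push_cast
    ring_nf

lemma pcomp_two (g : PowerSeries ℝ) : pcomp 2 g = 2 := by
  rw [show (2 : PowerSeries ℝ) = 1 + 1 by norm_num, pcomp_add, pcomp_one]

/-- `Σ_{k=0}^n S_{J,λ}^{(2)}(n,k) C_k^{(r)}(x) = Σ_{k=0}^n E_{k,λ}^{(r)}(x) S_{2,λ}(n,k)`. -/
theorem stmt_10 (lam : ℝ) (hlam : lam ≠ 0) (r : ℕ) (hr : 1 ≤ r)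
    (S2 : ℕ → ℕ → ℝ)
    (hS2 : ∀ (x : ℝ) (n : ℕ), dff lam x n = ∑ l ∈ Finset.range (n + 1), S2 n l * dff 1 x l)
    (E C : ℝ → ℕ → ℝ)
    (hE : ∀ x : ℝ, (degExp lam 1 + degExp lam (-1)) ^ r *
      PowerSeries.mk (fun n => E x n / n.factorial) = 2 ^ r * degExp lam x)
    (hC : ∀ x : ℝ, (onePlus 2 + 1) ^ r *
      PowerSeries.mk (fun n => C x n / n.factorial) = 2 ^ r * onePlus (x + r))
    (SJ2 : ℕ → ℕ → ℝ)
    (hSJ2 : ∀ k : ℕ, PowerSeries.mk (fun n => SJ2 n k / n.factorial) =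
      ((k.factorial : ℝ))⁻¹ • (pcomp (degExp lam 1) (degExp lam 1 - 1) - 1) ^ k)
    (n : ℕ) (x : ℝ) :
    ∑ k ∈ Finset.range (n + 1), SJ2 n k * C x k =
      ∑ k ∈ Finset.range (n + 1), E x k * S2 n k := by
  have hnfac : ((n.factorial : ℝ)) ≠ 0 := Nat.cast_ne_zero.2 n.factorial_ne_zero
  set A : PowerSeries ℝ := degExp lam 1 - 1 with hAdef
  have hA : constantCoeff A = 0 := constantCoeff_A
  set G : PowerSeries ℝ := pcomp A A with hGdef
  have hG : constantCoeff G = 0 := by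
    rw [hGdef, constantCoeff_pcomp hA, hA]
  have hA1 : A + 1 = degExp lam 1 := sub_add_cancel _ _
  have hG' : pcomp (degExp lam 1) A - 1 = G := by
    rw [← hA1, pcomp_add, pcomp_one, hGdef]
    ring
  -- identify S2 with the coefficients of A ^ l
  have hA_S2 : ∀ l, l ≤ n → coeff n (A ^ l) =
      l.factorial * S2 n l / n.factorial := by
    have hser : ∀ y : ℝ, dff lam y n =
        ∑ l ∈ range (n + 1),
          ((n.factorial : ℝ) * coeff n (A ^ l) / l.factorial) * dff 1 y l := by
      intro y
      have h2 := congrArg (coeff n) (key2 hlam y)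
      rw [coeff_pcomp, ← hAdef] at h2
      rw [show coeff n (degExp lam y) = dff lam y n / n.factorial from coeff_mk _ _] at h2
      have h3 : dff lam y n = (n.factorial : ℝ) * (dff lam y n / n.factorial) := by
        field_simp
      rw [h3, ← h2, Finset.mul_sum]
      apply Finset.sum_congr rfl
      intro l _
      rw [coeff_onePlus, div_eq_mul_inv, div_eq_mul_inv]
      ring
    have hzero : ∀ y : ℝ, ∑ l ∈ range (n + 1),
        (S2 n l - (n.factorial : ℝ) * coeff n (A ^ l) / l.factorial) * dff 1 y l = 0 := by
      intro y
      simp only [sub_mul]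
      rw [Finset.sum_sub_distrib, ← hS2 y n, ← hser y, sub_self]
    intro l hl
    have h5 := dff_indep (n + 1) _ hzero l (by omega)
    have hlf : ((l.factorial : ℝ)) ≠ 0 := Nat.cast_ne_zero.2 l.factorial_ne_zero
    have h6 : S2 n l = (n.factorial : ℝ) * coeff n (A ^ l) / l.factorial := by
      linarith [h5]
    rw [h6]
    field_simp
  -- identify SJ2 with the coefficients of G ^ k
  have hG_SJ : ∀ k, coeff n (G ^ k) = k.factorial * SJ2 n k / n.factorial := by
    intro k
    have h2 := congrArg (coeff n) (hSJ2 k)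
    rw [coeff_mk, hG', map_smul, smul_eq_mul] at h2
    have hkf : ((k.factorial : ℝ)) ≠ 0 := Nat.cast_ne_zero.2 k.factorial_ne_zero
    field_simp at h2
    rw [eq_div_iff hnfac]
    linear_combination -h2
  -- the transported generating function identities
  have hOG : ∀ w : ℝ, pcomp (onePlus w) G = pcomp (degExp lam w) A := by
    intro w
    rw [hGdef, pcomp_assoc hA hA, key2 hlam]
  have hCmp := congrArg (fun f => pcomp f G) (hC x)
  rw [pcomp_mul hG, pcomp_mul hG, pcomp_pow hG, pcomp_pow hG, pcomp_add, pcomp_one,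
    pcomp_two, hOG, hOG] at hCmp
  have hEmp := congrArg (fun f => pcomp f A) (hE x)
  rw [pcomp_mul hA, pcomp_mul hA, pcomp_pow hA, pcomp_pow hA, pcomp_add, pcomp_two] at hEmp
  have e2 : pcomp (degExp lam 1) A * pcomp (degExp lam 1) A = pcomp (degExp lam 2) A := by
    rw [← pcomp_mul hA, degExp_mul hlam]
    norm_num
  have e0 : pcomp (degExp lam 1) A * pcomp (degExp lam (-1)) A = 1 := by
    rw [← pcomp_mul hA, degExp_mul hlam]
    norm_num [degExp_zero lam hlam, pcomp_one]
  have hfact : pcomp (degExp lam 2) A + 1 =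
      pcomp (degExp lam 1) A * (pcomp (degExp lam 1) A + pcomp (degExp lam (-1)) A) := by
    rw [mul_add, e0, e2]
  have hxr : pcomp (degExp lam (x + r)) A =
      pcomp (degExp lam x) A * (pcomp (degExp lam 1) A) ^ r := by
    rw [← pcomp_pow hA, degExp_one_pow hlam, ← pcomp_mul hA, degExp_mul hlam]
  rw [hfact, hxr, mul_pow] at hCmp
  have hne1 : (pcomp (degExp lam 1) A) ^ r ≠ 0 := by
    apply pow_ne_zero
    intro h
    have := congrArg (constantCoeff) h
    rw [constantCoeff_pcomp hA, constantCoeff_degExp, map_zero] at this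
    norm_num at this
  have hne2 : (pcomp (degExp lam 1) A + pcomp (degExp lam (-1)) A) ^ r ≠ 0 := by
    apply pow_ne_zero
    intro h
    have := congrArg (constantCoeff) h
    rw [map_add, constantCoeff_pcomp hA, constantCoeff_pcomp hA, constantCoeff_degExp,
      constantCoeff_degExp, map_zero] at this
    norm_num at this
  have hkey : pcomp (PowerSeries.mk (fun k => C x k / k.factorial)) G =
      pcomp (PowerSeries.mk (fun k => E x k / k.factorial)) A := by
    apply mul_left_cancel₀ hne2
    apply mul_left_cancel₀ hne1
    calc (pcomp (degExp lam 1) A) ^ r *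
          ((pcomp (degExp lam 1) A + pcomp (degExp lam (-1)) A) ^ r *
            pcomp (PowerSeries.mk (fun k => C x k / k.factorial)) G)
        = (pcomp (degExp lam 1) A) ^ r *
          (pcomp (degExp lam 1) A + pcomp (degExp lam (-1)) A) ^ r *
            pcomp (PowerSeries.mk (fun k => C x k / k.factorial)) G := by ring
      _ = 2 ^ r * (pcomp (degExp lam x) A * (pcomp (degExp lam 1) A) ^ r) := hCmp
      _ = (2 ^ r * pcomp (degExp lam x) A) * (pcomp (degExp lam 1) A) ^ r := by ring
      _ = ((pcomp (degExp lam 1) A + pcomp (degExp lam (-1)) A) ^ r *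
            pcomp (PowerSeries.mk (fun k => E x k / k.factorial)) A) *
          (pcomp (degExp lam 1) A) ^ r := by rw [hEmp]
      _ = (pcomp (degExp lam 1) A) ^ r *
          ((pcomp (degExp lam 1) A + pcomp (degExp lam (-1)) A) ^ r *
            pcomp (PowerSeries.mk (fun k => E x k / k.factorial)) A) := by ring
  have hco := congrArg (coeff n) hkey
  rw [coeff_pcomp, coeff_pcomp] at hco
  have hL : ∀ k ∈ range (n + 1),
      coeff k (PowerSeries.mk (fun k => C x k / k.factorial)) * coeff n (G ^ k) =
      SJ2 n k * C x k / n.factorial := by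
    intro k _
    rw [coeff_mk, hG_SJ k]
    have hkf : ((k.factorial : ℝ)) ≠ 0 := Nat.cast_ne_zero.2 k.factorial_ne_zero
    field_simp
  have hR : ∀ k ∈ range (n + 1),
      coeff k (PowerSeries.mk (fun k => E x k / k.factorial)) * coeff n (A ^ k) =
      E x k * S2 n k / n.factorial := by
    intro k hk
    rw [mem_range] at hk
    rw [coeff_mk, hA_S2 k (by omega)]
    have hkf : ((k.factorial : ℝ)) ≠ 0 := Nat.cast_ne_zero.2 k.factorial_ne_zero
    field_simp
  rw [Finset.sum_congr rfl hL, Finset.sum_congr rfl hR, ← Finset.sum_div, ← Finset.sum_div,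
    div_eq_div_iff hnfac hnfac] at hco
  exact mul_right_cancel₀ hnfac hco
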